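/- The posetal reflection of the Kleene realizability doctrine over Rec is naturally isomorphic to the weak-subobject doctrine of Rec: for every A ⊆ ℕ, the assignment sending a realized predicate P on A to the morphism cmp_P : Σ(A,P) → A (where Σ(A,P) := {⟨a,n⟩ : a ∈ A, n ∈ P(a)} and cmp_P is induced by p₁) induces an order-isomorphism between the posetal reflection of (realized predicates on A, ⊑_A) and wSub_Rec(A); moreover these isomorphisms are natural in A, i.e. for every morphism h : A' → A of Rec, reindexing P ↦ h*P corresponds under them to pullback of weak subobjects along h. -/

import Mathlib

open CategoryTheory

namespace RecPaper

/-- Kleene application `{e}(n)`: apply the partial recursive function with Gödel code `e`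
to the input `n`. -/
def kap (e n : ℕ) : Part ℕ :=
  Nat.Partrec.Code.eval (Denumerable.ofNat Nat.Partrec.Code e) n

/-- The type of objects of the category `Rec`: subsets of `ℕ`. -/
def RecCat : Type := Set ℕ

/-- The underlying subset of `ℕ` of an object of `Rec`. -/
def RecCat.carrier (A : RecCat) : Set ℕ := A

/-- View a subset of `ℕ` as an object of `Rec`. -/
def RecCat.ofSet (A : Set ℕ) : RecCat := A

instance : CoeSort RecCat Type := ⟨fun A => {n : ℕ // n ∈ A.carrier}⟩

/-- A function between subsets of `ℕ` is *tracked* if there is a partial recursive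
function, defined on the whole domain, whose restriction to the domain is the given
function. -/
def Tracked {A B : RecCat} (f : A → B) : Prop :=
  ∃ g : ℕ →. ℕ, Nat.Partrec g ∧ ∀ a : A, g a.val = Part.some (f a).val

/-- The category `Rec` of subsets of `ℕ` and restrictions of partial recursive functions. -/
instance : Category RecCat where
  Hom A B := {f : A → B // Tracked f}
  id A := ⟨fun a => a, (fun n => n : ℕ → ℕ), Nat.Partrec.of_primrec Nat.Primrec.id,
    fun _ => rfl⟩
  comp {A B C} f g := ⟨fun a => g.1 (f.1 a), by
    obtain ⟨u, pu, hu⟩ := f.2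
    obtain ⟨v, pv, hv⟩ := g.2
    refine ⟨fun n => u n >>= v, pv.comp pu, fun a => ?_⟩
    simp [hu a, hv (f.1 a)]
    first
      | exact (Part.bind_some _ _).trans (hv (f.1 a))
      | (show Part.bind _ v = _; simp [hv (f.1 a)])
      | simp [Part.bind_eq_bind, hv (f.1 a)]⟩
  id_comp _ := rfl
  comp_id _ := rfl
  assoc _ _ _ := rfl

/-- The underlying function of a morphism of `Rec`. -/
def hfun {A B : RecCat} (f : A ⟶ B) : A → B := f.1

/-- The value of a morphism of `Rec` on an element, as a natural number. -/
def happ {A B : RecCat} (f : A ⟶ B) (a : A) : ℕ := (hfun f a).val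


/-- The realizability order `P ⊑_A Q` between realized predicates on `A`. -/
def rle (A : Set ℕ) (P Q : ℕ → Set ℕ) : Prop :=
  ∃ e : ℕ, ∀ a ∈ A, ∀ n ∈ P a, ∃ v ∈ Q a, kap e (Nat.pair a n) = Part.some v

/-- Reindexing of a realized predicate along a morphism of `Rec`. -/
def fstar {A B : RecCat} (f : A ⟶ B) (Q : ℕ → Set ℕ) : ℕ → Set ℕ :=
  fun a => {n | ∃ h : a ∈ A.carrier, n ∈ Q (happ f ⟨a, h⟩)}

/-- The comprehension set `Σ(A,P) = {⟨a,n⟩ : a ∈ A, n ∈ P(a)}`. -/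
def sigmaSet (A : RecCat) (P : ℕ → Set ℕ) : Set ℕ :=
  {m | ∃ a ∈ A.carrier, ∃ n ∈ P a, m = Nat.pair a n}

private lemma hom_ext {A B : RecCat} {f g : A ⟶ B} (h : ∀ a, happ f a = happ g a) : f = g :=
  Subtype.ext (funext fun a => Subtype.ext (h a))

private lemma kap_partrec (e : ℕ) : Nat.Partrec (kap e) :=
  Nat.Partrec.Code.exists_code.mpr ⟨_, rfl⟩

private lemma exists_kap_eq {g : ℕ →. ℕ} (hg : Nat.Partrec g) : ∃ e, kap e = g := by
  obtain ⟨c, hc⟩ := Nat.Partrec.Code.exists_code.mp hg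
  refine ⟨Encodable.encode c, ?_⟩
  funext n
  simp [kap, Denumerable.ofNat_encode, hc]

private lemma sigma_mem {A : RecCat} {P : ℕ → Set ℕ} {m : ℕ} (hm : m ∈ sigmaSet A P) :
    m.unpair.1 ∈ A.carrier ∧ m.unpair.2 ∈ P m.unpair.1 := by
  obtain ⟨a, ha, n, hn, rfl⟩ := hm
  simpa [Nat.unpair_pair] using ⟨ha, hn⟩

private lemma sigma_intro {A : RecCat} {P : ℕ → Set ℕ} {a n : ℕ} (ha : a ∈ A.carrier)
    (hn : n ∈ P a) : Nat.pair a n ∈ sigmaSet A P := ⟨a, ha, n, hn, rfl⟩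

/-- The comprehension morphism. -/
private def cmp (A : RecCat) (P : ℕ → Set ℕ) : RecCat.ofSet (sigmaSet A P) ⟶ A :=
  ⟨fun x => ⟨x.val.unpair.1, (sigma_mem x.2).1⟩,
   (fun n => n.unpair.1 : ℕ → ℕ), Nat.Partrec.of_primrec Nat.Primrec.left, fun _ => rfl⟩

private lemma happ_cmp {A : RecCat} {P : ℕ → Set ℕ} (x : RecCat.ofSet (sigmaSet A P)) :
    happ (cmp A P) x = x.val.unpair.1 := rfl

/-- The posetal reflection of the Kleene realizability doctrine over `Rec` is naturally
isomorphic to the weak-subobject doctrine of `Rec`, via `P ↦ (cmp_P : Σ(A,P) ⟶ A)`: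
the comprehension morphisms exist, the assignment is an order embedding onto
`wSub_Rec(A)` (it reflects and preserves the order and every weak subobject is mutually
factoring with some `cmp_P`), and it commutes with reindexing: pulling `cmp_P` back along
`h : A' ⟶ A` yields a weak subobject mutually factoring with `cmp_{h*P}`. -/
theorem rec_doctrine_iso_weak_subobjects :
    (∀ (A : RecCat) (P : ℕ → Set ℕ),
      ∃ c : RecCat.ofSet (sigmaSet A P) ⟶ A, ∀ x, happ c x = (Nat.unpair x.val).1) ∧
    (∀ (A : RecCat) (P Q : ℕ → Set ℕ)
       (cP : RecCat.ofSet (sigmaSet A P) ⟶ A) (cQ : RecCat.ofSet (sigmaSet A Q) ⟶ A),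
       (∀ x, happ cP x = (Nat.unpair x.val).1) →
       (∀ x, happ cQ x = (Nat.unpair x.val).1) →
       (rle A.carrier P Q ↔ ∃ k, k ≫ cQ = cP)) ∧
    (∀ (A B : RecCat) (f : B ⟶ A),
      ∃ (P : ℕ → Set ℕ) (cP : RecCat.ofSet (sigmaSet A P) ⟶ A),
        (∀ x, happ cP x = (Nat.unpair x.val).1) ∧
        (∃ k, k ≫ f = cP) ∧ (∃ k, k ≫ cP = f)) ∧
    (∀ (A' A : RecCat) (h : A' ⟶ A) (P : ℕ → Set ℕ)
       (cP : RecCat.ofSet (sigmaSet A P) ⟶ A)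
       (cP' : RecCat.ofSet (sigmaSet A' (fstar h P)) ⟶ A'),
       (∀ x, happ cP x = (Nat.unpair x.val).1) →
       (∀ x, happ cP' x = (Nat.unpair x.val).1) →
       ∀ (W : RecCat) (w₁ : W ⟶ RecCat.ofSet (sigmaSet A P)) (w₂ : W ⟶ A'),
         IsPullback w₁ w₂ cP h →
         ((∃ k, k ≫ w₂ = cP') ∧ (∃ k, k ≫ cP' = w₂))) := by
  refine ⟨fun A P => ⟨cmp A P, fun _ => rfl⟩, ?_, ?_, ?_⟩
  · -- order embedding
    intro A P Q cP cQ hP hQ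
    constructor
    · rintro ⟨e, he⟩
      have key : ∀ x : (RecCat.ofSet (sigmaSet A P) : Type), ∃ v,
          v ∈ Q x.val.unpair.1 ∧ kap e x.val = Part.some v := by
        intro x
        obtain ⟨ha, hn⟩ := sigma_mem x.2
        obtain ⟨v, hv, hvk⟩ := he _ ha _ hn
        exact ⟨v, hv, by rwa [Nat.pair_unpair] at hvk⟩
      choose v hv hvk using key
      have hA : ∀ x : (RecCat.ofSet (sigmaSet A P) : Type), x.val.unpair.1 ∈ A.carrier :=
        fun x => (sigma_mem x.2).1
      let F : (RecCat.ofSet (sigmaSet A P) : Type) → (RecCat.ofSet (sigmaSet A Q) : Type) :=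
        fun x => ⟨Nat.pair x.val.unpair.1 (v x), sigma_intro (hA x) (hv x)⟩
      have hpr : Nat.Partrec fun n => (kap e n).map (fun w => Nat.pair n.unpair.1 w) := by
        apply Partrec.nat_iff.mp
        exact (Partrec.nat_iff.mpr (kap_partrec e)).map
          (Primrec₂.to_comp (Primrec₂.natPair.comp
            ((Primrec.fst.comp Primrec.unpair).comp Primrec.fst) Primrec.snd))
      have htr : Tracked F :=
        ⟨fun n => (kap e n).map (fun w => Nat.pair n.unpair.1 w), hpr, fun x => by
          simp [F, hvk x]⟩
      refine ⟨⟨F, htr⟩, hom_ext fun x => ?_⟩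
      show happ cQ (F x) = happ cP x
      rw [hQ, hP]
      simp [F, Nat.unpair_pair]
    · rintro ⟨k, hk⟩
      obtain ⟨g, hg, htr⟩ := k.2
      have hG : Nat.Partrec fun n => (g n).map (fun w => w.unpair.2) := by
        apply Partrec.nat_iff.mp
        exact (Partrec.nat_iff.mpr hg).map
          (Primrec₂.to_comp (show Primrec fun p : ℕ × ℕ => p.2.unpair.2 from
            Primrec.snd.comp (Primrec.unpair.comp Primrec.snd)))
      obtain ⟨e, he⟩ := exists_kap_eq hG
      refine ⟨e, fun a ha n hn => ?_⟩
      set x : (RecCat.ofSet (sigmaSet A P) : Type) := ⟨Nat.pair a n, sigma_intro ha hn⟩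
      have h1 : happ cQ (k.1 x) = happ cP x := by rw [← hk]; rfl
      have ha' : (k.1 x).val.unpair.1 = a := by
        rw [← hQ (k.1 x), h1, hP]
        simp [x, Nat.unpair_pair]
      refine ⟨(k.1 x).val.unpair.2, ?_, ?_⟩
      · have := (sigma_mem (k.1 x).2).2
        rwa [ha'] at this
      · rw [he]
        have := htr x
        simp only [x] at this
        simp [this]; rfl
  · -- surjectivity
    intro A B f
    refine ⟨fun a => {b | ∃ hb : b ∈ B.carrier, happ f ⟨b, hb⟩ = a}, cmp A _,
      fun _ => rfl, ?_, ?_⟩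
    · -- k₁ : Σ ⟶ B with k₁ ≫ f = cmp
      refine ⟨⟨fun x => ⟨x.val.unpair.2, (sigma_mem x.2).2.choose⟩,
        (fun n => n.unpair.2 : ℕ → ℕ), Nat.Partrec.of_primrec Nat.Primrec.right,
        fun _ => rfl⟩, hom_ext fun x => ?_⟩
      exact (sigma_mem x.2).2.choose_spec
    · -- k₂ : B ⟶ Σ with k₂ ≫ cmp = f
      obtain ⟨g, hg, htr⟩ := f.2
      have hG : Nat.Partrec fun n => (g n).map (fun w => Nat.pair w n) := by
        apply Partrec.nat_iff.mp
        exact (Partrec.nat_iff.mpr hg).map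
          (Primrec₂.to_comp (Primrec₂.natPair.comp Primrec.snd Primrec.fst))
      refine ⟨⟨fun b => ⟨Nat.pair (happ f b) b.val, sigma_intro (hfun f b).2 ⟨b.2, rfl⟩⟩,
        fun n => (g n).map (fun w => Nat.pair w n), hG, fun b => by simp [htr b]; rfl⟩,
        hom_ext fun b => ?_⟩
      show (Nat.pair (happ f b) b.val).unpair.1 = happ f b
      simp [Nat.unpair_pair]
  · -- naturality
    intro A' A h P cP cP' hP hP' W w₁ w₂ pb
    obtain ⟨g, hg, htr⟩ := h.2
    constructor
    · -- k : Σ(A', h*P) ⟶ W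
      have hA' : ∀ x : (RecCat.ofSet (sigmaSet A' (fstar h P)) : Type),
          x.val.unpair.1 ∈ A'.carrier := fun x => (sigma_mem x.2).1
      let F : (RecCat.ofSet (sigmaSet A' (fstar h P)) : Type) →
          (RecCat.ofSet (sigmaSet A P) : Type) :=
        fun x => ⟨Nat.pair (happ h ⟨x.val.unpair.1, hA' x⟩) x.val.unpair.2,
          sigma_intro (hfun h ⟨x.val.unpair.1, hA' x⟩).2 (sigma_mem x.2).2.choose_spec⟩
      have hG : Nat.Partrec fun n => (g n.unpair.1).map (fun w => Nat.pair w n.unpair.2) := by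
        apply Partrec.nat_iff.mp
        exact ((Partrec.nat_iff.mpr hg).comp
            ((Primrec.fst.comp Primrec.unpair).to_comp)).map
          (Primrec₂.to_comp (Primrec₂.natPair.comp Primrec.snd
            ((Primrec.snd.comp Primrec.unpair).comp Primrec.fst)))
      have htrF : Tracked F :=
        ⟨fun n => (g n.unpair.1).map (fun w => Nat.pair w n.unpair.2), hG, fun x => by
          simp [F, htr ⟨x.val.unpair.1, hA' x⟩]; rfl⟩
      let u : RecCat.ofSet (sigmaSet A' (fstar h P)) ⟶ RecCat.ofSet (sigmaSet A P) :=
        ⟨F, htrF⟩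
      have hsq : u ≫ cP = cP' ≫ h := by
        apply hom_ext
        intro x
        have h1 : happ cP (F x) = happ h ⟨x.val.unpair.1, hA' x⟩ := by
          rw [hP]; simp [F, Nat.unpair_pair]
        have h2 : hfun cP' x = ⟨x.val.unpair.1, hA' x⟩ := Subtype.ext (hP' x)
        show happ cP (F x) = happ h (hfun cP' x)
        rw [h1, h2]
      exact ⟨pb.lift u cP' hsq, pb.lift_snd u cP' hsq⟩
    · -- k : W ⟶ Σ(A', h*P)
      obtain ⟨g1, hg1, htr1⟩ := w₁.2
      obtain ⟨g2, hg2, htr2⟩ := w₂.2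
      have hmem : ∀ w : (W : Type),
          Nat.pair (happ w₂ w) ((happ w₁ w).unpair.2) ∈ sigmaSet A' (fstar h P) := by
        intro w
        apply sigma_intro (hfun w₂ w).2
        refine ⟨(hfun w₂ w).2, ?_⟩
        have hsq : happ cP (hfun w₁ w) = happ h (hfun w₂ w) :=
          congrArg (fun f : W ⟶ A => happ f w) pb.w
        have := (sigma_mem (hfun w₁ w).2).2
        rwa [← hP (hfun w₁ w), hsq] at this
      have hG : Nat.Partrec fun n =>
          (g2 n).bind (fun a => (g1 n).map (fun x => Nat.pair a x.unpair.2)) := by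
        apply Partrec.nat_iff.mp
        refine (Partrec.nat_iff.mpr hg2).bind ?_
        show Partrec fun p : ℕ × ℕ => (g1 p.1).map (fun x => Nat.pair p.2 x.unpair.2)
        exact ((Partrec.nat_iff.mpr hg1).comp Computable.fst).map
          (Primrec₂.to_comp (Primrec₂.natPair.comp (Primrec.snd.comp Primrec.fst)
            ((Primrec.snd.comp Primrec.unpair).comp Primrec.snd)))
      refine ⟨⟨fun w => ⟨Nat.pair (happ w₂ w) ((happ w₁ w).unpair.2), hmem w⟩,
        fun n => (g2 n).bind (fun a => (g1 n).map (fun x => Nat.pair a x.unpair.2)),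
        hG, fun w => by simp [htr1 w, htr2 w, happ, hfun]⟩, hom_ext fun w => ?_⟩
      show happ cP' ⟨Nat.pair (happ w₂ w) ((happ w₁ w).unpair.2), hmem w⟩ = happ w₂ w
      rw [hP']
      simp [Nat.unpair_pair]

end RecPaper
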